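/- Let n ≥ 2 be an integer, τ ∈ [0,1], and α = (α_2,…,α_n) ∈ ℝ^{n−1} with |α_i| ≤ 1/(10n) for all i. Then x = (x_1,…,x_{n+1}) = Φ(τ,α) has nonnegative coordinates summing to 1 (so x lies in the n-dimensional simplex), and x_j ≥ 4/(5n) for every j with 2 ≤ j ≤ n. Consequently the associated cut positions n·(x_1 + … + x_j), for j = 1,…,n, satisfy that each consecutive difference equals n·x_{j+1} ≥ 4/5 > 0; i.e., the cuts encoded by Φ(τ,α) are fairly evenly spaced and do not cross. -/

import Mathlib

/-!
Extend `α` by zero outside `[2, n]` and call the result `a`. Coordinate `k` (0-based) of `Φ(τ, α)`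
is `0_τ(k) - τ a(k+2) + a(k+1) - (1-τ) a(k)`. Summing over `k`, the three shifted sums of `a` all
equal `∑ α_i`, and their weights `-τ + 1 - (1-τ)` cancel, so the coordinate sum is that of `0_τ`,
namely `1`. An interior coordinate loses at most `(τ + 1 + (1-τ)) / (10n) = 1/(5n)` from `1/n`,
leaving `4/(5n)`; the two end coordinates are `τ (1/n - α_2)` and `(1-τ) (1/n - α_n)`, both `≥ 0`.
-/

/-- The vector `d^τ_i = -τ·e_{i-1} + e_i - (1-τ)·e_{i+1}` of `ℝ^{n+1}`
(`e_1, …, e_{n+1}` is the standard basis, so the 1-indexed position `p`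
corresponds to the 0-based index `p - 1`). -/
def dvec (n : ℕ) (τ : ℝ) (i : ℕ) : Fin (n + 1) → ℝ := fun k =>
  if (k : ℕ) + 2 = i then -τ
  else if (k : ℕ) + 1 = i then 1
  else if (k : ℕ) = i then -(1 - τ) else 0

/-- The origin `0_τ = (τ/n, 1/n, …, 1/n, (1-τ)/n)` of `ℝ^{n+1}`. -/
noncomputable def originVec (n : ℕ) (τ : ℝ) : Fin (n + 1) → ℝ := fun k =>
  if (k : ℕ) = 0 then τ / n else if (k : ℕ) = n then (1 - τ) / n else 1 / n

/-- `Φ(τ, α) = 0_τ + Σ_{i=2}^{n} α_i · d^τ_i`, the point with transformed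
coordinates `(τ; α_2, …, α_n)`. -/
noncomputable def Phi (n : ℕ) (τ : ℝ) (α : ℕ → ℝ) : Fin (n + 1) → ℝ := fun k =>
  originVec n τ k + ∑ i ∈ Finset.Icc 2 n, α i * dvec n τ i k

open Finset

lemma abs_indicator_le {ι : Type*} {s : Set ι} {f : ι → ℝ} {ε : ℝ} (hε : 0 ≤ ε)
    (hf : ∀ i ∈ s, |f i| ≤ ε) (i : ι) : |s.indicator f i| ≤ ε := by
  by_cases hi : i ∈ s
  · simpa [Set.indicator_of_mem hi] using hf i hi
  · simpa [Set.indicator_of_notMem hi] using hε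

lemma sum_range_succ_shift_eq {M : Type*} [AddCommMonoid M] {f : ℕ → M} {m : ℕ} (h0 : f 0 = 0) (hm : f (m + 1) = 0) :
    ∑ k ∈ range (m + 1), f (k + 1) = ∑ k ∈ range (m + 1), f k := by
  rw [sum_range_succ, sum_range_succ' f, hm, h0]

lemma indicator_Icc_two_eq_zero {n i : ℕ} {α : ℕ → ℝ} (hi : i ≤ 1 ∨ n + 1 ≤ i) :
    (Set.Icc 2 n).indicator α i = 0 :=
  Set.indicator_of_notMem (by simp only [Set.mem_Icc]; omega) α

lemma sum_filter_val_lt_succ {M : Type*} [AddCommMonoid M] {m j : ℕ} (f : Fin m → M) (hj : j < m) :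
    ∑ i ∈ univ.filter (fun i : Fin m => (i : ℕ) < j + 1), f i
      = f ⟨j, hj⟩ + ∑ i ∈ univ.filter (fun i : Fin m => (i : ℕ) < j), f i := by
  have : univ.filter (fun i : Fin m => (i : ℕ) < j + 1)
      = insert ⟨j, hj⟩ (univ.filter fun i : Fin m => (i : ℕ) < j) := by
    ext i
    simp only [mem_filter, mem_insert, mem_univ, true_and, Fin.ext_iff]
    omega
  rw [this, sum_insert (by simp)]

lemma dvec_apply (n : ℕ) (τ : ℝ) (i : ℕ) (k : Fin (n + 1)) :
    dvec n τ i k = -τ * (if (k : ℕ) + 2 = i then 1 else 0) + (if (k : ℕ) + 1 = i then 1 else 0)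
      - (1 - τ) * (if (k : ℕ) = i then 1 else 0) := by
  unfold dvec
  split_ifs <;> first | omega | ring

lemma Phi_apply (n : ℕ) (τ : ℝ) (α : ℕ → ℝ) (k : Fin (n + 1)) :
    Phi n τ α k = originVec n τ k - τ * (Set.Icc 2 n).indicator α (k + 2)
      + (Set.Icc 2 n).indicator α (k + 1) - (1 - τ) * (Set.Icc 2 n).indicator α k := by
  simp only [Phi, dvec_apply, mul_add, mul_sub, sum_add_distrib, sum_sub_distrib, mul_ite,
    mul_one, mul_zero, sum_ite_eq, Set.indicator_apply, Set.mem_Icc, mem_Icc]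
  split_ifs <;> ring

lemma sum_originVec {n : ℕ} (hn : 1 ≤ n) (τ : ℝ) : ∑ k, originVec n τ k = 1 := by
  have hn0 : (n : ℝ) ≠ 0 := by positivity
  have h : ∀ k : Fin (n + 1), originVec n τ k = 1 / n - (1 - τ) / n * (if (k : ℕ) = 0 then 1 else 0)
      - τ / n * (if (k : ℕ) = n then 1 else 0) := by
    intro k
    unfold originVec
    split_ifs <;> first | omega | ring
  simp only [h, Fin.sum_univ_eq_sum_range (fun j => 1 / (n : ℝ) - (1 - τ) / n * (if j = 0 then 1 else 0)
      - τ / n * (if j = n then 1 else 0)), sum_sub_distrib, ← mul_sum, sum_ite_eq', mem_range,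
    Nat.zero_lt_succ, Nat.lt_succ_self, if_true, sum_const, card_range, nsmul_eq_mul]
  push_cast
  field_simp
  ring

lemma sum_Phi {n : ℕ} (hn : 1 ≤ n) (τ : ℝ) (α : ℕ → ℝ) : ∑ k, Phi n τ α k = 1 := by
  set a := (Set.Icc 2 n).indicator α
  have h1 : ∑ k ∈ range (n + 1), a (k + 1) = ∑ k ∈ range (n + 1), a k :=
    sum_range_succ_shift_eq (indicator_Icc_two_eq_zero (by omega)) (indicator_Icc_two_eq_zero (by omega))
  have h2 : ∑ k ∈ range (n + 1), a (k + 2) = ∑ k ∈ range (n + 1), a (k + 1) :=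
    sum_range_succ_shift_eq (f := fun k => a (k + 1)) (indicator_Icc_two_eq_zero (by omega))
      (indicator_Icc_two_eq_zero (by omega))
  simp only [Phi_apply, sum_add_distrib, sum_sub_distrib, ← mul_sum, sum_originVec hn]
  rw [Fin.sum_univ_eq_sum_range (fun k => a (k + 2)), Fin.sum_univ_eq_sum_range (fun k => a (k + 1)),
    Fin.sum_univ_eq_sum_range a, h2, h1]
  ring

section Bounds

variable {n : ℕ} {τ : ℝ} {α : ℕ → ℝ}

lemma four_div_five_mul_le_Phi (hτ : τ ∈ Set.Icc (0 : ℝ) 1)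
    (hα : ∀ i, 2 ≤ i → i ≤ n → |α i| ≤ 1 / (10 * n)) {k : Fin (n + 1)}
    (hk₁ : 1 ≤ (k : ℕ)) (hkn : (k : ℕ) + 1 ≤ n) : 4 / (5 * n) ≤ Phi n τ α k := by
  have hb := abs_indicator_le (s := Set.Icc 2 n) (by positivity) (fun i hi => hα i hi.1 hi.2)
  have h₀ : originVec n τ k = 1 / n := by
    rw [originVec, if_neg (by omega), if_neg (by omega)]
  have h₂ := abs_le.mp (hb (k + 2))
  have h₁ := abs_le.mp (hb (k + 1))
  have h₃ := abs_le.mp (hb k)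
  have hn : (0 : ℝ) < n := by exact_mod_cast (show 0 < n by omega)
  rw [Phi_apply, h₀]
  have : 4 / (5 * (n : ℝ)) = 1 / n - 2 * (1 / (10 * n)) := by field_simp; ring
  nlinarith [hτ.1, hτ.2]

lemma Phi_nonneg (hn : 1 ≤ n) (hτ : τ ∈ Set.Icc (0 : ℝ) 1)
    (hα : ∀ i, 2 ≤ i → i ≤ n → |α i| ≤ 1 / (10 * n)) (k : Fin (n + 1)) : 0 ≤ Phi n τ α k := by
  have hb := abs_indicator_le (s := Set.Icc 2 n) (by positivity) (fun i hi => hα i hi.1 hi.2)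
  have hε : 1 / (10 * (n : ℝ)) ≤ 1 / n := by gcongr; linarith
  rcases Nat.eq_zero_or_pos k with hk | hk
  · have h₀ : originVec n τ k = τ * (1 / n) := by
      rw [originVec, if_pos hk, div_eq_mul_one_div]
    rw [Phi_apply, h₀, hk, indicator_Icc_two_eq_zero (by omega : 0 ≤ 1 ∨ _),
      indicator_Icc_two_eq_zero (by omega : 1 ≤ 1 ∨ _)]
    nlinarith [mul_nonneg hτ.1 (sub_nonneg.2 ((le_of_abs_le (hb 2)).trans hε))]
  rcases (show (k : ℕ) + 1 ≤ n ∨ (k : ℕ) = n by omega) with hkn | hkn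
  · exact le_trans (by positivity) (four_div_five_mul_le_Phi hτ hα hk hkn)
  · have h₀ : originVec n τ k = (1 - τ) * (1 / n) := by
      rw [originVec, if_neg (by omega), if_pos hkn, div_eq_mul_one_div]
    rw [Phi_apply, h₀, hkn, indicator_Icc_two_eq_zero (by omega : n + 2 ≤ 1 ∨ _),
      indicator_Icc_two_eq_zero (by omega : n + 1 ≤ 1 ∨ _)]
    nlinarith [mul_nonneg (sub_nonneg.2 hτ.2) (sub_nonneg.2 ((le_of_abs_le (hb n)).trans hε))]

end Bounds

theorem stmt12 (n : ℕ) (hn : 2 ≤ n) (τ : ℝ) (hτ : τ ∈ Set.Icc (0 : ℝ) 1)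
    (α : ℕ → ℝ) (hα : ∀ i : ℕ, 2 ≤ i → i ≤ n → |α i| ≤ 1 / (10 * n))
    (x : Fin (n + 1) → ℝ) (hx : x = Phi n τ α) :
    (∀ k, 0 ≤ x k) ∧ (∑ k : Fin (n + 1), x k = 1) ∧
    (∀ k : Fin (n + 1), 1 ≤ (k : ℕ) → (k : ℕ) + 1 ≤ n → 4 / (5 * n) ≤ x k) ∧
    (∀ (j : ℕ) (_ : 1 ≤ j) (hj : j + 1 ≤ n),
      ((n : ℝ) * ∑ i ∈ Finset.univ.filter (fun i : Fin (n + 1) => (i : ℕ) < j + 1), x i)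
        - ((n : ℝ) * ∑ i ∈ Finset.univ.filter (fun i : Fin (n + 1) => (i : ℕ) < j), x i)
        = n * x ⟨j, by omega⟩ ∧
      4 / 5 ≤ (n : ℝ) * x ⟨j, by omega⟩) := by
  subst hx
  refine ⟨Phi_nonneg (by omega) hτ hα, sum_Phi (by omega) τ α,
    fun k hk₁ hkn => four_div_five_mul_le_Phi hτ hα hk₁ hkn, fun j hj₁ hj => ⟨?_, ?_⟩⟩
  · rw [sum_filter_val_lt_succ _ (by omega : j < n + 1)]
    ring
  · have hn₀ : (n : ℝ) ≠ 0 := by positivity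
    calc (4 : ℝ) / 5 = n * (4 / (5 * n)) := by field_simp
      _ ≤ n * Phi n τ α ⟨j, by omega⟩ :=
        mul_le_mul_of_nonneg_left (four_div_five_mul_le_Phi hτ hα hj₁ hj) n.cast_nonneg
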